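/- The amplitude-process decoherence functionals are consistent: for every n ≥ 1 and all A, B ⊆ Ω_n, D_{n+1}(A→, B→) = D_n(A, B). In particular μ_{n+1}(A→) = μ_n(A) for all A ⊆ Ω_n. (This is the consistency part of Theorem 5.1.) -/

import Mathlib

/-!
An `(n+1)`-path is exactly an `n`-path `ω` followed by a successor `y` of its endpoint, and its
amplitude is `a_n(ω) · a(ω_{n-1}, y)`. Summing over `y` with `∑_y a x y = 1` gives
`∑_{A→} a_{n+1} = ∑_A a_n`, and `D` and `μ` depend on `A` only through this sum.
-/

variable {V : Type*} [Fintype V] [DecidableEq V]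

/-- An `n`-path: `ω 0 = v₀` and each entry is a successor of the previous one. -/
def IsPath (v₀ : V) (succ : V → Finset V) (n : ℕ) (ω : Fin n → V) : Prop :=
  (∀ i : Fin n, (i : ℕ) = 0 → ω i = v₀) ∧
    ∀ i j : Fin n, (j : ℕ) = (i : ℕ) + 1 → ω j ∈ succ (ω i)

instance (v₀ : V) (succ : V → Finset V) (n : ℕ) :
    DecidablePred (IsPath v₀ succ n) := fun ω => by
  unfold IsPath; infer_instance

/-- `Ω_n`, the finite set of `n`-paths. -/
def pathSet (v₀ : V) (succ : V → Finset V) (n : ℕ) : Finset (Fin n → V) :=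
  Finset.univ.filter (IsPath v₀ succ n)

/-- The amplitude `a_n(ω) = ∏_{k=0}^{n-2} a (ω k) (ω (k+1))`. -/
noncomputable def amp (a : V → V → ℂ) (n : ℕ) (ω : Fin n → V) : ℂ :=
  ∏ k : Fin (n - 1),
    a (ω ⟨k.1, by have := k.2; omega⟩) (ω ⟨k.1 + 1, by have := k.2; omega⟩)

/-- The decoherence functional `D_n(A,B) = (∑_{ω ∈ A} a_n(ω)) ⬝ conj (∑_{ω' ∈ B} a_n(ω'))`. -/
noncomputable def Dfun (a : V → V → ℂ) (n : ℕ) (A B : Finset (Fin n → V)) : ℂ :=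
  (∑ ω ∈ A, amp a n ω) * (starRingEnd ℂ) (∑ ω ∈ B, amp a n ω)

/-- The `q`-measure `μ_n(A) = |∑_{ω ∈ A} a_n(ω)|²`. -/
noncomputable def qMeas (a : V → V → ℂ) (n : ℕ) (A : Finset (Fin n → V)) : ℝ :=
  Complex.normSq (∑ ω ∈ A, amp a n ω)

/-- The one-step extension `A→ = {ω ∈ Ω_{n+1} : ω|_{Fin n} ∈ A}`. -/
def ext (v₀ : V) (succ : V → Finset V) {n : ℕ} (A : Finset (Fin n → V)) :
    Finset (Fin (n + 1) → V) :=
  (pathSet v₀ succ (n + 1)).filter (fun ω => (fun k : Fin n => ω k.castSucc) ∈ A)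

omit [Fintype V] [DecidableEq V] in
theorem amp_snoc (a : V → V → ℂ) (m : ℕ) (ω : Fin (m + 1) → V) (y : V) :
    amp a (m + 2) (Fin.snoc ω y) = amp a (m + 1) ω * a (ω (Fin.last m)) y := by
  rw [amp, amp]
  erw [Fin.prod_univ_castSucc]
  simp [Fin.snoc, Fin.last]

omit [Fintype V] [DecidableEq V] in
theorem isPath_snoc_iff {v₀ : V} {succ : V → Finset V} {m : ℕ} {ω : Fin (m + 1) → V} {y : V} :
    IsPath v₀ succ (m + 2) (Fin.snoc ω y) ↔
      IsPath v₀ succ (m + 1) ω ∧ y ∈ succ (ω (Fin.last m)) := by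
  constructor
  · rintro ⟨hstart, hstep⟩
    refine ⟨⟨fun i hi => ?_, fun i j hij => ?_⟩, ?_⟩
    · simpa using hstart i.castSucc hi
    · simpa using hstep i.castSucc j.castSucc hij
    · simpa using hstep (Fin.last m).castSucc (Fin.last _) rfl
  · rintro ⟨⟨hstart, hstep⟩, hy⟩
    refine ⟨fun i hi => ?_, fun i j hij => ?_⟩
    · obtain ⟨i, rfl⟩ : ∃ k : Fin (m + 1), k.castSucc = i := ⟨⟨i, by omega⟩, rfl⟩
      simpa using hstart i hi
    · obtain ⟨i, rfl⟩ : ∃ k : Fin (m + 1), k.castSucc = i := ⟨⟨i, by have := j.2; omega⟩, rfl⟩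
      induction j using Fin.lastCases with
      | last =>
        obtain rfl : i = Fin.last m := Fin.ext (by simp at hij ⊢; omega)
        simpa using hy
      | cast j => simpa using hstep i j hij

theorem mem_ext_iff {v₀ : V} {succ : V → Finset V} {n : ℕ} {A : Finset (Fin n → V)}
    {τ : Fin (n + 1) → V} :
    τ ∈ ext v₀ succ A ↔ IsPath v₀ succ (n + 1) τ ∧ Fin.init τ ∈ A := by
  simp only [ext, pathSet, Finset.mem_filter, Finset.mem_univ, true_and]
  rfl

theorem snoc_mem_ext_iff {v₀ : V} {succ : V → Finset V} {m : ℕ} {A : Finset (Fin (m + 1) → V)}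
    (hA : A ⊆ pathSet v₀ succ (m + 1)) {ω : Fin (m + 1) → V} {y : V} :
    Fin.snoc ω y ∈ ext v₀ succ A ↔ ω ∈ A ∧ y ∈ succ (ω (Fin.last m)) := by
  rw [mem_ext_iff, isPath_snoc_iff, Fin.init_snoc]
  constructor
  · rintro ⟨⟨-, hy⟩, hω⟩
    exact ⟨hω, hy⟩
  · rintro ⟨hω, hy⟩
    exact ⟨⟨(Finset.mem_filter.mp (hA hω)).2, hy⟩, hω⟩

theorem sum_amp_ext {v₀ : V} {succ : V → Finset V} {a : V → V → ℂ}
    (ha : ∀ x : V, ∑ y ∈ succ x, a x y = 1) {m : ℕ} {A : Finset (Fin (m + 1) → V)}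
    (hA : A ⊆ pathSet v₀ succ (m + 1)) :
    ∑ τ ∈ ext v₀ succ A, amp a (m + 2) τ = ∑ ω ∈ A, amp a (m + 1) ω := by
  calc _ = ∑ p ∈ A.sigma (fun ω => succ (ω (Fin.last m))), amp a (m + 2) (Fin.snoc p.1 p.2) := by
        symm
        refine Finset.sum_nbij' (fun p => Fin.snoc p.1 p.2) (fun τ => ⟨Fin.init τ, τ (Fin.last _)⟩)
          ?_ ?_ ?_ ?_ (fun _ _ => rfl)
        · rintro ⟨ω, y⟩ hp
          exact (snoc_mem_ext_iff hA).mpr (Finset.mem_sigma.mp hp)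
        · intro τ hτ
          rw [← Fin.snoc_init_self τ, snoc_mem_ext_iff hA] at hτ
          exact Finset.mem_sigma.mpr hτ
        · rintro ⟨ω, y⟩ -
          simp
        · intro τ _
          exact Fin.snoc_init_self τ
    _ = ∑ ω ∈ A, ∑ y ∈ succ (ω (Fin.last m)), amp a (m + 1) ω * a (ω (Fin.last m)) y := by
        simp only [Finset.sum_sigma, amp_snoc]
    _ = ∑ ω ∈ A, amp a (m + 1) ω := by
        simp only [← Finset.mul_sum, ha, mul_one]

/-- **Theorem 5.1** (consistency part): `D_{n+1}(A→, B→) = D_n(A, B)`, and in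
particular `μ_{n+1}(A→) = μ_n(A)`. -/
theorem stmt2 (v₀ : V) (succ : V → Finset V) (a : V → V → ℂ)
    (ha : ∀ x : V, ∑ y ∈ succ x, a x y = 1) (n : ℕ) (hn : 1 ≤ n)
    (A B : Finset (Fin n → V))
    (hA : A ⊆ pathSet v₀ succ n) (hB : B ⊆ pathSet v₀ succ n) :
    Dfun a (n + 1) (ext v₀ succ A) (ext v₀ succ B) = Dfun a n A B ∧
      qMeas a (n + 1) (ext v₀ succ A) = qMeas a n A := by
  obtain ⟨m, rfl⟩ : ∃ m, n = m + 1 := ⟨n - 1, by omega⟩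
  rw [Dfun, Dfun, qMeas, qMeas, sum_amp_ext ha hA, sum_amp_ext ha hB]
  exact ⟨rfl, rfl⟩
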